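/- arXiv:2108.10392 — 7 statements merged into one kernel-verified Lean document; each statement's English description precedes it below -/
import Mathlib

section
/- Fix x₀ ∈ ℝⁿ and a horizon N ≥ 2. Let u*₀, …, u*_{N−2} be a greedy optimal control sequence from x₀ with trajectory x*₀, …, x*_{N−1}. Assume (i) there exists a control sequence minimizing the stacked objective Q̄(x₀ | ·) over all sequences in U, and (ii) for every control sequence ū₀, …, ū_{N−2} ∈ U with trajectory x̄₀ = x₀, x̄_{i+1} = F(x̄_i, ū_i), one has Σ_{i=1}^{N−1} J(x*_i) ≤ Σ_{i=1}^{N−1} J(x̄_i). Then the minimum over all control sequences u₀, …, u_{N−2} ∈ U of Σ_{i=0}^{N−2} Q(x_i, u_i) + J(x_{N−1}) equals Σ_{i=0}^{N−2} (min over u ∈ U of Q(x*_i, u)) + J(x*_{N−1}). -/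
/-- Trajectory generated by transition map `F` from initial state `x0` under
control sequence `u`. -/
def traj {E Em : Type*} (F : E → Em → E) (x0 : E) (u : ℕ → Em) : ℕ → E
  | 0 => x0
  | k + 1 => F (traj F x0 u k) (u k)

/-- The stacked objective `Q̄(x₀ | u₀, …, u_{N−2}) = Σ_{i=0}^{N−2} Q(xᵢ, uᵢ) + J(x_{N−1})`,
where `Q(x,u) = c(x,u) + J(F(x,u))`. -/
noncomputable def stacked {E Em : Type*} (F : E → Em → E) (c : E → Em → ℝ) (J : E → ℝ)
    (N : ℕ) (x0 : E) (u : ℕ → Em) : ℝ :=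
  (∑ i ∈ Finset.range (N - 1),
      (c (traj F x0 u i) (u i) + J (F (traj F x0 u i) (u i))))
    + J (traj F x0 u (N - 1))

lemma sum_J_split {E Em : Type*} (F : E → Em → E) (J : E → ℝ)
    (x0 : E) (u : ℕ → Em) (M : ℕ) :
    (∑ i ∈ Finset.range M, J (traj F x0 u i)) + J (traj F x0 u M)
      = J x0 + ∑ i ∈ Finset.Icc 1 M, J (traj F x0 u i) := by
  have h1 : (∑ i ∈ Finset.range M, J (traj F x0 u i)) + J (traj F x0 u M)
      = ∑ i ∈ Finset.range (M + 1), J (traj F x0 u i) :=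
    (Finset.sum_range_succ _ M).symm
  rw [h1, Finset.sum_range_succ']
  have h2 : Finset.Icc 1 M = Finset.Ico 1 (M + 1) := by
    rw [Finset.Ico_add_one_right_eq_Icc]
  rw [h2, Finset.sum_Ico_eq_sum_range]
  simp [traj, add_comm, Nat.add_comm]

theorem stacked_RL_QV_min_eq_sum_of_min {n m : ℕ}
    (U : Set (EuclideanSpace ℝ (Fin m))) (hU : U.Nonempty)
    (F : EuclideanSpace ℝ (Fin n) → EuclideanSpace ℝ (Fin m) → EuclideanSpace ℝ (Fin n))
    (c : EuclideanSpace ℝ (Fin n) → EuclideanSpace ℝ (Fin m) → ℝ)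
    (J : EuclideanSpace ℝ (Fin n) → ℝ)
    -- Bellman equation with attained minimum
    (hBellEx : ∀ x, ∃ u ∈ U, c x u + J (F x u) = J x)
    (hBellLe : ∀ x, ∀ u ∈ U, J x ≤ c x u + J (F x u))
    (x0 : EuclideanSpace ℝ (Fin n)) (N : ℕ) (hN : 2 ≤ N)
    -- greedy optimal control sequence `ustar` from `x0`
    (ustar : ℕ → EuclideanSpace ℝ (Fin m))
    (hustarU : ∀ i, i < N - 1 → ustar i ∈ U)
    (hgreedy : ∀ i, i < N - 1 → ∀ u ∈ U,
      c (traj F x0 ustar i) (ustar i) + J (F (traj F x0 ustar i) (ustar i))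
        ≤ c (traj F x0 ustar i) u + J (F (traj F x0 ustar i) u))
    -- (i) a minimizer of the stacked objective over admissible sequences exists
    (hexists : ∃ ub : ℕ → EuclideanSpace ℝ (Fin m),
      (∀ i, i < N - 1 → ub i ∈ U) ∧
      ∀ u : ℕ → EuclideanSpace ℝ (Fin m), (∀ i, i < N - 1 → u i ∈ U) →
        stacked F c J N x0 ub ≤ stacked F c J N x0 u)
    -- (ii) the greedy trajectory minimizes the sum of optimal costs-to-go
    (hJle : ∀ u : ℕ → EuclideanSpace ℝ (Fin m), (∀ i, i < N - 1 → u i ∈ U) →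
      ∑ i ∈ Finset.Icc 1 (N - 1), J (traj F x0 ustar i)
        ≤ ∑ i ∈ Finset.Icc 1 (N - 1), J (traj F x0 u i)) :
    -- the minimum of the stacked objective over all admissible control sequences
    -- equals Σᵢ minᵤ Q(x*ᵢ, u) + J(x*_{N−1}) (the min attained by the greedy inputs)
    IsLeast
      {r : ℝ | ∃ u : ℕ → EuclideanSpace ℝ (Fin m),
        (∀ i, i < N - 1 → u i ∈ U) ∧ r = stacked F c J N x0 u}
      ((∑ i ∈ Finset.range (N - 1),
          (c (traj F x0 ustar i) (ustar i) + J (F (traj F x0 ustar i) (ustar i))))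
        + J (traj F x0 ustar (N - 1))) := by
  -- value of greedy sequence: Q(x*_i, ustar i) = J(x*_i)
  have hgval : ∀ i, i < N - 1 →
      c (traj F x0 ustar i) (ustar i) + J (F (traj F x0 ustar i) (ustar i))
        = J (traj F x0 ustar i) := by
    intro i hi
    obtain ⟨u', hu'U, hu'⟩ := hBellEx (traj F x0 ustar i)
    have h1 := hgreedy i hi u' hu'U
    have h2 := hBellLe (traj F x0 ustar i) (ustar i) (hustarU i hi)
    linarith
  have hstar : stacked F c J N x0 ustar
      = J x0 + ∑ i ∈ Finset.Icc 1 (N - 1), J (traj F x0 ustar i) := by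
    unfold stacked
    rw [Finset.sum_congr rfl (fun i hi => hgval i (Finset.mem_range.mp hi))]
    have : ∀ i ∈ Finset.range (N-1), J (traj F x0 ustar i) = J (traj F x0 ustar i) :=
      fun _ _ => rfl
    exact sum_J_split F J x0 ustar (N - 1)
  constructor
  · exact ⟨ustar, hustarU, rfl⟩
  · rintro r ⟨u, huU, rfl⟩
    have hterm : ∀ i ∈ Finset.range (N - 1),
        J (traj F x0 u i) ≤ c (traj F x0 u i) (u i) + J (F (traj F x0 u i) (u i)) := by
      intro i hi
      exact hBellLe _ (u i) (huU i (Finset.mem_range.mp hi))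
    have h3 : J x0 + ∑ i ∈ Finset.Icc 1 (N - 1), J (traj F x0 u i)
        ≤ stacked F c J N x0 u := by
      rw [← sum_J_split F J x0 u (N - 1)]
      unfold stacked
      have := Finset.sum_le_sum hterm
      linarith
    have h4 := hJle u huU
    have h5 : stacked F c J N x0 ustar
        = (∑ i ∈ Finset.range (N - 1),
            (c (traj F x0 ustar i) (ustar i) + J (F (traj F x0 ustar i) (ustar i))))
          + J (traj F x0 ustar (N - 1)) := rfl
    rw [← h5]
    linarith
end

section
/- Fix x₀ ∈ ℝⁿ and a horizon N ≥ 2, let u*₀, …, u*_{N−2} be a greedy optimal control sequence from x₀ with trajectory x*₀, …, x*_{N−1}, and assume that for every control sequence ū₀, …, ū_{N−2} ∈ U with trajectory x̄₀ = x₀, x̄_{i+1} = F(x̄_i, ū_i), one has Σ_{i=1}^{N−1} J(x*_i) ≤ Σ_{i=1}^{N−1} J(x̄_i). Then any control sequence ū₀, …, ū_{N−2} ∈ U minimizing the stacked objective Q̄(x₀ | ·), with trajectory x̄₀, …, x̄_{N−1}, satisfies Σ_{i=0}^{N−2} c(x̄_i, ū_i) + J(x̄_{N−1}) = Σ_{i=0}^{N−2}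 c(x*_i, u*_i) + J(x*_{N−1}); in particular the two sequences yield the same total accumulated cost plus terminal optimal cost-to-go, so minimizing the stacked objective yields an optimal policy. -/
theorem stacked_RL_QV_minimizer_is_optimal {n m : ℕ}
    (U : Set (EuclideanSpace ℝ (Fin m))) (hU : U.Nonempty)
    (F : EuclideanSpace ℝ (Fin n) → EuclideanSpace ℝ (Fin m) → EuclideanSpace ℝ (Fin n))
    (c : EuclideanSpace ℝ (Fin n) → EuclideanSpace ℝ (Fin m) → ℝ)
    (J : EuclideanSpace ℝ (Fin n) → ℝ)
    -- Bellman equation with attained minimum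
    (hBellEx : ∀ x, ∃ u ∈ U, c x u + J (F x u) = J x)
    (hBellLe : ∀ x, ∀ u ∈ U, J x ≤ c x u + J (F x u))
    (x0 : EuclideanSpace ℝ (Fin n)) (N : ℕ) (hN : 2 ≤ N)
    -- greedy optimal control sequence `ustar` from `x0`
    (ustar : ℕ → EuclideanSpace ℝ (Fin m))
    (hustarU : ∀ i, i < N - 1 → ustar i ∈ U)
    (hgreedy : ∀ i, i < N - 1 → ∀ u ∈ U,
      c (traj F x0 ustar i) (ustar i) + J (F (traj F x0 ustar i) (ustar i))
        ≤ c (traj F x0 ustar i) u + J (F (traj F x0 ustar i) u))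
    -- the greedy trajectory minimizes the sum of optimal costs-to-go
    (hJle : ∀ u : ℕ → EuclideanSpace ℝ (Fin m), (∀ i, i < N - 1 → u i ∈ U) →
      ∑ i ∈ Finset.Icc 1 (N - 1), J (traj F x0 ustar i)
        ≤ ∑ i ∈ Finset.Icc 1 (N - 1), J (traj F x0 u i))
    -- `ubar` minimizes the stacked objective over admissible sequences
    (ubar : ℕ → EuclideanSpace ℝ (Fin m))
    (hubarU : ∀ i, i < N - 1 → ubar i ∈ U)
    (hubarMin : ∀ u : ℕ → EuclideanSpace ℝ (Fin m), (∀ i, i < N - 1 → u i ∈ U) →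
      stacked F c J N x0 ubar ≤ stacked F c J N x0 u) :
    (∑ i ∈ Finset.range (N - 1), c (traj F x0 ubar i) (ubar i))
        + J (traj F x0 ubar (N - 1))
      = (∑ i ∈ Finset.range (N - 1), c (traj F x0 ustar i) (ustar i))
        + J (traj F x0 ustar (N - 1)) := by

  -- greedy steps achieve the Bellman equation exactly
  have hstar_eq : ∀ i, i < N - 1 →
      c (traj F x0 ustar i) (ustar i) + J (F (traj F x0 ustar i) (ustar i))
        = J (traj F x0 ustar i) := by
    intro i hi
    obtain ⟨u', hu'U, hu'⟩ := hBellEx (traj F x0 ustar i)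
    have h1 := hgreedy i hi u' hu'U
    have h2 := hBellLe (traj F x0 ustar i) (ustar i) (hustarU i hi)
    linarith
  -- lower bound: any admissible sequence has cost at least J x0
  have hlow : ∀ (u : ℕ → EuclideanSpace ℝ (Fin m)), (∀ i, i < N - 1 → u i ∈ U) →
      J x0 ≤ (∑ i ∈ Finset.range (N - 1), c (traj F x0 u i) (u i))
        + J (traj F x0 u (N - 1)) := by
    intro u hu
    have key : ∀ k, k ≤ N - 1 →
        J x0 ≤ (∑ i ∈ Finset.range k, c (traj F x0 u i) (u i)) + J (traj F x0 u k) := by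
      intro k
      induction k with
      | zero => intro _; simp [traj]
      | succ k ih =>
        intro hk
        have h1 := ih (by omega)
        have h2 := hBellLe (traj F x0 u k) (u k) (hu k (by omega))
        rw [Finset.sum_range_succ]
        have h3 : traj F x0 u (k + 1) = F (traj F x0 u k) (u k) := rfl
        rw [h3]
        linarith
    exact key (N - 1) le_rfl
  -- the greedy sequence attains cost exactly J x0
  have hstarS : (∑ i ∈ Finset.range (N - 1), c (traj F x0 ustar i) (ustar i))
      + J (traj F x0 ustar (N - 1)) = J x0 := by
    have key : ∀ k, k ≤ N - 1 →
        (∑ i ∈ Finset.range k, c (traj F x0 ustar i) (ustar i)) + J (traj F x0 ustar k)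
          = J x0 := by
      intro k
      induction k with
      | zero => intro _; simp [traj]
      | succ k ih =>
        intro hk
        have h1 := ih (by omega)
        have h2 := hstar_eq k (by omega)
        rw [Finset.sum_range_succ]
        have h3 : traj F x0 ustar (k + 1) = F (traj F x0 ustar k) (ustar k) := rfl
        rw [h3]
        linarith
    exact key (N - 1) le_rfl
  -- split the stacked objective
  have hsplit : ∀ (u : ℕ → EuclideanSpace ℝ (Fin m)),
      stacked F c J N x0 u
        = ((∑ i ∈ Finset.range (N - 1), c (traj F x0 u i) (u i))
            + J (traj F x0 u (N - 1)))
          + ∑ i ∈ Finset.Icc 1 (N - 1), J (traj F x0 u i) := by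
    intro u
    have hT : ∑ i ∈ Finset.Icc 1 (N - 1), J (traj F x0 u i)
        = ∑ i ∈ Finset.range (N - 1), J (F (traj F x0 u i) (u i)) := by
      rw [← Finset.Ico_add_one_right_eq_Icc, Finset.sum_Ico_eq_sum_range]
      simp only [Nat.add_sub_cancel, Nat.succ_sub_one]
      apply Finset.sum_congr rfl
      intro i _
      have : traj F x0 u (1 + i) = F (traj F x0 u i) (u i) := by
        rw [Nat.add_comm]; rfl
      rw [this]
    rw [hT]
    unfold stacked
    rw [Finset.sum_add_distrib]
    ring
  have hmin := hubarMin ustar hustarU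
  have hJ := hJle ubar hubarU
  rw [hsplit ubar, hsplit ustar] at hmin
  have hlb := hlow ubar hubarU
  linarith
end

section
/- Fix x₀ ∈ ℝⁿ, a horizon N ≥ 2, and δ > 0. Suppose X ⊆ ℝⁿ contains all states of all trajectories of length N from x₀ (i.e., for every control sequence u₀, …, u_{N−2} ∈ U, every state x₀, x₁, …, x_{N−1} of its trajectory lies in X); that |c(x,u)| ≤ r̄·δ and ‖F(x,u) − x‖ ≤ f̄·δ for all x ∈ X, u ∈ U; and that ω : [0,∞) → [0,∞) is nondecreasing and |J(y) − J(z)| ≤ ω(‖y − z‖) for all y, z ∈ X. Let u*₀, …, u*_{N−2} be a greedy optimal control sequence from x₀ with trajectory x*₀, …, x*_{N−1}. Then 0 ≤ [Σ_{i=0}^{N−2} (min over u ∈ U of Q(x*_i, u)) + J(x*_{N−1})] − [infimum over all control sequences of the stacked objective Σ_{i=0}^{N−2} Q(x_i, u_i) + J(x_{N−1})] ≤ 2·r̄·(N−1)·δ + 2·N·ω(N·δ·f̄). -/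
theorem stacked_gap_bound {n m : ℕ}
    (U : Set (EuclideanSpace ℝ (Fin m))) (hU : U.Nonempty)
    (F : EuclideanSpace ℝ (Fin n) → EuclideanSpace ℝ (Fin m) → EuclideanSpace ℝ (Fin n))
    (c : EuclideanSpace ℝ (Fin n) → EuclideanSpace ℝ (Fin m) → ℝ)
    (J : EuclideanSpace ℝ (Fin n) → ℝ)
    -- Bellman equation with attained minimum
    (hBellEx : ∀ x, ∃ u ∈ U, c x u + J (F x u) = J x)
    (hBellLe : ∀ x, ∀ u ∈ U, J x ≤ c x u + J (F x u))
    (x0 : EuclideanSpace ℝ (Fin n)) (N : ℕ) (hN : 2 ≤ N)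
    (δ : ℝ) (hδ : 0 < δ)
    -- `X` contains all states of all trajectories of length `N` from `x0`
    (X : Set (EuclideanSpace ℝ (Fin n)))
    (hX : ∀ u : ℕ → EuclideanSpace ℝ (Fin m), (∀ i, i < N - 1 → u i ∈ U) →
      ∀ i, i < N → traj F x0 u i ∈ X)
    -- bounds on the per-step cost and on the one-step state increment
    (rbar fbar : ℝ)
    (hc : ∀ x ∈ X, ∀ u ∈ U, |c x u| ≤ rbar * δ)
    (hF : ∀ x ∈ X, ∀ u ∈ U, ‖F x u - x‖ ≤ fbar * δ)
    -- `ω` is a nondecreasing modulus of continuity of `J` on `X`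
    (ω : ℝ → ℝ)
    (hω0 : ∀ s, 0 ≤ s → 0 ≤ ω s)
    (hωmono : ∀ s t, 0 ≤ s → s ≤ t → ω s ≤ ω t)
    (hωJ : ∀ y ∈ X, ∀ z ∈ X, |J y - J z| ≤ ω ‖y - z‖)
    -- greedy optimal control sequence `ustar` from `x0`
    (ustar : ℕ → EuclideanSpace ℝ (Fin m))
    (hustarU : ∀ i, i < N - 1 → ustar i ∈ U)
    (hgreedy : ∀ i, i < N - 1 → ∀ u ∈ U,
      c (traj F x0 ustar i) (ustar i) + J (F (traj F x0 ustar i) (ustar i))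
        ≤ c (traj F x0 ustar i) u + J (F (traj F x0 ustar i) u)) :
    0 ≤ ((∑ i ∈ Finset.range (N - 1),
            (c (traj F x0 ustar i) (ustar i) + J (F (traj F x0 ustar i) (ustar i))))
          + J (traj F x0 ustar (N - 1)))
        - sInf {r : ℝ | ∃ u : ℕ → EuclideanSpace ℝ (Fin m),
            (∀ i, i < N - 1 → u i ∈ U) ∧ r = stacked F c J N x0 u} ∧
    ((∑ i ∈ Finset.range (N - 1),
            (c (traj F x0 ustar i) (ustar i) + J (F (traj F x0 ustar i) (ustar i))))
          + J (traj F x0 ustar (N - 1)))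
        - sInf {r : ℝ | ∃ u : ℕ → EuclideanSpace ℝ (Fin m),
            (∀ i, i < N - 1 → u i ∈ U) ∧ r = stacked F c J N x0 u}
      ≤ 2 * rbar * (N - 1 : ℝ) * δ + 2 * (N : ℝ) * ω ((N : ℝ) * δ * fbar) := by
  obtain ⟨u₀, hu₀⟩ := hU
  have hN1 : 1 ≤ N := le_trans (by norm_num) hN
  have hNpos : 0 < N := hN1
  -- x0 ∈ X
  have hadm0 : ∀ i, i < N - 1 → (fun _ : ℕ => u₀) i ∈ U := fun _ _ => hu₀
  have hx0X : x0 ∈ X := hX (fun _ => u₀) hadm0 0 hNpos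
  have hfpos : 0 ≤ fbar * δ := le_trans (norm_nonneg _) (hF x0 hx0X u₀ hu₀)
  have hrpos : 0 ≤ rbar * δ := le_trans (abs_nonneg _) (hc x0 hx0X u₀ hu₀)
  set B : ℝ := ((N : ℝ) - 1) * (rbar * δ) + (N : ℝ) * ω ((N : ℝ) * δ * fbar) with hB
  have hcast : ((N - 1 : ℕ) : ℝ) = (N : ℝ) - 1 := by
    rw [Nat.cast_sub hN1]; norm_num
  -- key claim
  have key : ∀ u : ℕ → EuclideanSpace ℝ (Fin m), (∀ i, i < N - 1 → u i ∈ U) →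
      |stacked F c J N x0 u - (N : ℝ) * J x0| ≤ B := by
    intro u hu
    have hxX : ∀ i, i < N → traj F x0 u i ∈ X := hX u hu
    have hdist : ∀ i, i ≤ N - 1 → ‖traj F x0 u i - x0‖ ≤ (i : ℝ) * (fbar * δ) := by
      intro i hi
      induction i with
      | zero => simp [traj]
      | succ k ih =>
        have hk1 : k < N - 1 := hi
        have hkX : traj F x0 u k ∈ X := hxX k (lt_of_lt_of_le hk1 (Nat.sub_le N 1))
        have h1 : ‖F (traj F x0 u k) (u k) - traj F x0 u k‖ ≤ fbar * δ :=
          hF _ hkX _ (hu k hk1)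
        have h2 : ‖traj F x0 u k - x0‖ ≤ (k : ℝ) * (fbar * δ) := ih (le_of_lt hk1)
        calc ‖traj F x0 u (k + 1) - x0‖
            = ‖(F (traj F x0 u k) (u k) - traj F x0 u k) + (traj F x0 u k - x0)‖ := by
              simp [traj, sub_add_sub_cancel]
          _ ≤ ‖F (traj F x0 u k) (u k) - traj F x0 u k‖ + ‖traj F x0 u k - x0‖ :=
              norm_add_le _ _
          _ ≤ fbar * δ + (k : ℝ) * (fbar * δ) := add_le_add h1 h2
          _ = ((k : ℕ) + 1 : ℝ) * (fbar * δ) := by ring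
          _ = ((k + 1 : ℕ) : ℝ) * (fbar * δ) := by push_cast; ring
    have hJbd : ∀ i, i ≤ N - 1 → |J (traj F x0 u i) - J x0| ≤ ω ((N : ℝ) * δ * fbar) := by
      intro i hi
      have hiX : traj F x0 u i ∈ X := hxX i (lt_of_le_of_lt hi (Nat.sub_lt hNpos one_pos))
      refine le_trans (hωJ _ hiX _ hx0X) (hωmono _ _ (norm_nonneg _)
        (le_trans (hdist i hi) ?_))
      have : (i : ℝ) ≤ (N : ℝ) := by
        exact_mod_cast le_trans hi (Nat.sub_le N 1)
      calc (i : ℝ) * (fbar * δ) ≤ (N : ℝ) * (fbar * δ) :=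
            mul_le_mul_of_nonneg_right this hfpos
        _ = (N : ℝ) * δ * fbar := by ring
    -- rewrite stacked
    have hstep : ∀ k, F (traj F x0 u k) (u k) = traj F x0 u (k + 1) := fun k => rfl
    have hNsum : (N : ℝ) * J x0 = (∑ _i ∈ Finset.range (N - 1), J x0) + J x0 := by
      rw [Finset.sum_const, Finset.card_range, nsmul_eq_mul, hcast]; ring
    have hexp : stacked F c J N x0 u - (N : ℝ) * J x0 =
        (∑ i ∈ Finset.range (N - 1),
          (c (traj F x0 u i) (u i) + (J (traj F x0 u (i + 1)) - J x0)))
        + (J (traj F x0 u (N - 1)) - J x0) := by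
      simp only [stacked, hstep, hNsum, Finset.sum_add_distrib, Finset.sum_sub_distrib]
      ring
    rw [hexp]
    have hsumbd : |∑ i ∈ Finset.range (N - 1),
        (c (traj F x0 u i) (u i) + (J (traj F x0 u (i + 1)) - J x0))|
        ≤ ((N : ℝ) - 1) * (rbar * δ + ω ((N : ℝ) * δ * fbar)) := by
      refine le_trans (Finset.abs_sum_le_sum_abs _ _) ?_
      have : ∀ i ∈ Finset.range (N - 1),
          |c (traj F x0 u i) (u i) + (J (traj F x0 u (i + 1)) - J x0)|
          ≤ rbar * δ + ω ((N : ℝ) * δ * fbar) := by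
        intro i hi
        rw [Finset.mem_range] at hi
        have hiX : traj F x0 u i ∈ X := hxX i (lt_of_lt_of_le hi (Nat.sub_le N 1))
        have h1 : |c (traj F x0 u i) (u i)| ≤ rbar * δ := hc _ hiX _ (hu i hi)
        have h2 : |J (traj F x0 u (i + 1)) - J x0| ≤ ω ((N : ℝ) * δ * fbar) :=
          hJbd (i + 1) (Nat.succ_le_of_lt hi)
        exact le_trans (abs_add_le _ _) (add_le_add h1 h2)
      refine le_trans (Finset.sum_le_sum this) ?_
      rw [Finset.sum_const, Finset.card_range, nsmul_eq_mul, hcast]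
    have hlast : |J (traj F x0 u (N - 1)) - J x0| ≤ ω ((N : ℝ) * δ * fbar) :=
      hJbd (N - 1) le_rfl
    calc |_ + _| ≤ _ + _ := abs_add_le _ _
      _ ≤ ((N : ℝ) - 1) * (rbar * δ + ω ((N : ℝ) * δ * fbar))
           + ω ((N : ℝ) * δ * fbar) := add_le_add hsumbd hlast
      _ = B := by
        rw [hB]
        have : (1 : ℝ) ≤ (N : ℝ) := by exact_mod_cast hN1
        ring
  -- the greedy value
  set S : Set ℝ := {r : ℝ | ∃ u : ℕ → EuclideanSpace ℝ (Fin m),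
      (∀ i, i < N - 1 → u i ∈ U) ∧ r = stacked F c J N x0 u} with hS
  have hmem : stacked F c J N x0 ustar ∈ S := ⟨ustar, hustarU, rfl⟩
  have hbdd : ∀ r ∈ S, (N : ℝ) * J x0 - B ≤ r := by
    rintro r ⟨u, hu, rfl⟩
    have := (abs_le.mp (key u hu)).1
    linarith
  have hne : S.Nonempty := ⟨_, hmem⟩
  have hInfle : sInf S ≤ stacked F c J N x0 ustar :=
    csInf_le ⟨(N : ℝ) * J x0 - B, hbdd⟩ hmem
  have hleInf : (N : ℝ) * J x0 - B ≤ sInf S := le_csInf hne hbdd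
  have hstar : |stacked F c J N x0 ustar - (N : ℝ) * J x0| ≤ B := key ustar hustarU
  have hstar' := (abs_le.mp hstar).2
  have heq : ((∑ i ∈ Finset.range (N - 1),
      (c (traj F x0 ustar i) (ustar i) + J (F (traj F x0 ustar i) (ustar i))))
      + J (traj F x0 ustar (N - 1))) = stacked F c J N x0 ustar := rfl
  refine ⟨?_, ?_⟩
  · rw [heq]; linarith
  · rw [heq]
    have hfinal : 2 * B ≤ 2 * rbar * ((N : ℝ) - 1) * δ
        + 2 * (N : ℝ) * ω ((N : ℝ) * δ * fbar) := by rw [hB]; ring_nf; linarith [le_refl (0:ℝ)]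
    linarith
end

section
/- Fix x₀ ∈ ℝⁿ, a horizon N ≥ 2, δ̄ > 0, and a set X ⊆ ℝⁿ. Suppose that for each δ ∈ (0, δ̄] there are a transition map F_δ : ℝⁿ → ℝᵐ → ℝⁿ and a per-step cost c_δ : ℝⁿ → ℝᵐ → ℝ such that: J satisfies the Bellman equation with attained minimum for (F_δ, c_δ); all states of all trajectories of length N from x₀ under (F_δ, U) lie in X; |c_δ(x,u)| ≤ r̄·δ and ‖F_δ(x,u) − x‖ ≤ f̄·δ for all x ∈ X, u ∈ U; and a greedy optimal control sequence u*₀(δ), …, u*_{N−2}(δ) from x₀ exists, with trajectory x*₀(δ), …, x*_{N−1}(δ). Suppose further that ω : [0,∞) → [0,∞) is nondecreasing, |J(y) − J(z)| ≤ ω(‖y − z‖) for all y, z ∈ X, and ω(s) → 0 as s → 0⁺. Then the gap G(δ) := [Σ_{i=0}^{N−2} (min over u ∈ U of (c_δ(x*_i(δ),u) + J(F_δ(x*_i(δ),u)))) + J(x*_{N−1}(δ))] − [infimum over all control sequences u₀, …, u_{N−2} ∈ U of Σ_{i=0}^{N−2} (c_δ(x_i,u_i) + J(F_δ(x_i,u_i)))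 + J(x_{N−1})] tends to 0 as δ → 0⁺. -/
open Filter

theorem stacked_gap_tendsto_zero {n m : ℕ}
    (U : Set (EuclideanSpace ℝ (Fin m))) (hU : U.Nonempty)
    (x0 : EuclideanSpace ℝ (Fin n)) (N : ℕ) (hN : 2 ≤ N)
    (δbar : ℝ) (hδbar : 0 < δbar)
    (X : Set (EuclideanSpace ℝ (Fin n)))
    (J : EuclideanSpace ℝ (Fin n) → ℝ)
    -- the family of transition maps and per-step costs, parametrized by δ
    (Fd : ℝ → EuclideanSpace ℝ (Fin n) → EuclideanSpace ℝ (Fin m) → EuclideanSpace ℝ (Fin n))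
    (cd : ℝ → EuclideanSpace ℝ (Fin n) → EuclideanSpace ℝ (Fin m) → ℝ)
    (rbar fbar : ℝ)
    -- greedy optimal control sequences, one for each δ
    (ustar : ℝ → ℕ → EuclideanSpace ℝ (Fin m))
    -- for every δ ∈ (0, δ̄]:
    (hBellEx : ∀ δ, 0 < δ → δ ≤ δbar →
      ∀ x, ∃ u ∈ U, cd δ x u + J (Fd δ x u) = J x)
    (hBellLe : ∀ δ, 0 < δ → δ ≤ δbar →
      ∀ x, ∀ u ∈ U, J x ≤ cd δ x u + J (Fd δ x u))
    (hX : ∀ δ, 0 < δ → δ ≤ δbar →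
      ∀ u : ℕ → EuclideanSpace ℝ (Fin m), (∀ i, i < N - 1 → u i ∈ U) →
        ∀ i, i < N → traj (Fd δ) x0 u i ∈ X)
    (hc : ∀ δ, 0 < δ → δ ≤ δbar → ∀ x ∈ X, ∀ u ∈ U, |cd δ x u| ≤ rbar * δ)
    (hF : ∀ δ, 0 < δ → δ ≤ δbar → ∀ x ∈ X, ∀ u ∈ U, ‖Fd δ x u - x‖ ≤ fbar * δ)
    (hustarU : ∀ δ, 0 < δ → δ ≤ δbar → ∀ i, i < N - 1 → ustar δ i ∈ U)
    (hgreedy : ∀ δ, 0 < δ → δ ≤ δbar → ∀ i, i < N - 1 → ∀ u ∈ U,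
      cd δ (traj (Fd δ) x0 (ustar δ) i) (ustar δ i)
          + J (Fd δ (traj (Fd δ) x0 (ustar δ) i) (ustar δ i))
        ≤ cd δ (traj (Fd δ) x0 (ustar δ) i) u
          + J (Fd δ (traj (Fd δ) x0 (ustar δ) i) u))
    -- `ω` is a nondecreasing modulus of continuity of `J` on `X`, vanishing at 0⁺
    (ω : ℝ → ℝ)
    (hω0 : ∀ s, 0 ≤ s → 0 ≤ ω s)
    (hωmono : ∀ s t, 0 ≤ s → s ≤ t → ω s ≤ ω t)
    (hωJ : ∀ y ∈ X, ∀ z ∈ X, |J y - J z| ≤ ω ‖y - z‖)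
    (hωlim : Tendsto ω (nhdsWithin 0 (Set.Ioi 0)) (nhds 0)) :
    -- the gap between the sum of separate minima and the infimum of the
    -- stacked objective tends to 0 as δ → 0⁺
    Tendsto (fun δ : ℝ =>
        ((∑ i ∈ Finset.range (N - 1),
            (cd δ (traj (Fd δ) x0 (ustar δ) i) (ustar δ i)
              + J (Fd δ (traj (Fd δ) x0 (ustar δ) i) (ustar δ i))))
          + J (traj (Fd δ) x0 (ustar δ) (N - 1)))
        - sInf {r : ℝ | ∃ u : ℕ → EuclideanSpace ℝ (Fin m),
            (∀ i, i < N - 1 → u i ∈ U) ∧ r = stacked (Fd δ) (cd δ) J N x0 u})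
      (nhdsWithin 0 (Set.Ioi 0)) (nhds 0) := by

  classical
  obtain ⟨u0, hu0⟩ := hU
  have hx0X : x0 ∈ X := by
    have h := hX δbar hδbar le_rfl (fun _ => u0) (fun _ _ => hu0) 0 (by omega)
    simpa [traj] using h
  have hfbar : 0 ≤ fbar := by
    have h := hF δbar hδbar le_rfl x0 hx0X u0 hu0
    nlinarith [norm_nonneg (Fd δbar x0 u0 - x0)]
  set C : ℝ := N * (fbar + 1) with hC
  have hNpos : (0:ℝ) < N := by positivity
  have hCpos : 0 < C := by positivity
  -- trajectory distance bound
  have key : ∀ δ, 0 < δ → δ ≤ δbar → ∀ u : ℕ → EuclideanSpace ℝ (Fin m),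
      (∀ i, i < N - 1 → u i ∈ U) → ∀ i, i < N →
      ‖traj (Fd δ) x0 u i - x0‖ ≤ (i : ℝ) * (fbar * δ) := by
    intro δ hδ hδb u hu i
    induction i with
    | zero => intro _; simp [traj]
    | succ k ih =>
      intro hk
      have hkN : k < N := by omega
      have hkN1 : k < N - 1 := by omega
      have hxk : traj (Fd δ) x0 u k ∈ X := hX δ hδ hδb u hu k hkN
      have h1 := hF δ hδ hδb _ hxk (u k) (hu k hkN1)
      have h2 := ih hkN
      have htri : ‖traj (Fd δ) x0 u (k+1) - x0‖
          ≤ ‖traj (Fd δ) x0 u (k+1) - traj (Fd δ) x0 u k‖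
            + ‖traj (Fd δ) x0 u k - x0‖ := norm_sub_le_norm_sub_add_norm_sub _ _ _
      have heq : traj (Fd δ) x0 u (k+1) = Fd δ (traj (Fd δ) x0 u k) (u k) := rfl
      rw [heq] at htri ⊢
      push_cast
      nlinarith [h1, h2, htri]
  -- J bound at trajectory points
  have hJb : ∀ δ, 0 < δ → δ ≤ δbar → ∀ u : ℕ → EuclideanSpace ℝ (Fin m),
      (∀ i, i < N - 1 → u i ∈ U) → ∀ i, i < N →
      |J (traj (Fd δ) x0 u i) - J x0| ≤ ω (C * δ) := by
    intro δ hδ hδb u hu i hi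
    have hxi : traj (Fd δ) x0 u i ∈ X := hX δ hδ hδb u hu i hi
    have h1 := hωJ _ hxi x0 hx0X
    refine h1.trans (hωmono _ _ (norm_nonneg _) ?_)
    have h2 := key δ hδ hδb u hu i hi
    have hiN : (i : ℝ) ≤ N := by exact_mod_cast hi.le
    refine h2.trans ?_
    rw [hC]
    have h3 : (i:ℝ)*(fbar*δ) ≤ (N:ℝ)*(fbar*δ) :=
      mul_le_mul_of_nonneg_right hiN (mul_nonneg hfbar hδ.le)
    nlinarith [mul_pos hNpos hδ]
  -- greedy equality: each greedy term equals J at the state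
  have hgEq : ∀ δ, 0 < δ → δ ≤ δbar → ∀ i, i < N - 1 →
      cd δ (traj (Fd δ) x0 (ustar δ) i) (ustar δ i)
        + J (Fd δ (traj (Fd δ) x0 (ustar δ) i) (ustar δ i))
      = J (traj (Fd δ) x0 (ustar δ) i) := by
    intro δ hδ hδb i hi
    obtain ⟨u, huU, hueq⟩ := hBellEx δ hδ hδb (traj (Fd δ) x0 (ustar δ) i)
    have h1 := hgreedy δ hδ hδb i hi u huU
    have h2 := hBellLe δ hδ hδb (traj (Fd δ) x0 (ustar δ) i) (ustar δ i)
      (hustarU δ hδ hδb i hi)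
    linarith
  -- uniform bounds on stacked objectives
  have hlow : ∀ δ, 0 < δ → δ ≤ δbar → ∀ u : ℕ → EuclideanSpace ℝ (Fin m),
      (∀ i, i < N - 1 → u i ∈ U) →
      (N : ℝ) * J x0 - (N : ℝ) * ω (C * δ) ≤ stacked (Fd δ) (cd δ) J N x0 u := by
    intro δ hδ hδb u hu
    have hterm : ∀ i ∈ Finset.range (N - 1),
        J x0 - ω (C * δ) ≤ cd δ (traj (Fd δ) x0 u i) (u i)
          + J (Fd δ (traj (Fd δ) x0 u i) (u i)) := by
      intro i hi
      rw [Finset.mem_range] at hi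
      have hiN : i < N := by omega
      have h1 := hBellLe δ hδ hδb (traj (Fd δ) x0 u i) (u i) (hu i hi)
      have h2 := hJb δ hδ hδb u hu i hiN
      have := abs_le.mp h2
      linarith [this.1, this.2]
    have hsum := Finset.card_nsmul_le_sum (Finset.range (N - 1)) _ _ hterm
    rw [Finset.card_range, nsmul_eq_mul] at hsum
    have hlast := hJb δ hδ hδb u hu (N - 1) (by omega)
    have hlast' := (abs_le.mp hlast).1
    have hcast : ((N - 1 : ℕ) : ℝ) = (N : ℝ) - 1 := by
      have : 1 ≤ N := by omega
      push_cast [this]; ring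
    rw [hcast] at hsum
    unfold stacked
    nlinarith [hsum, hlast']
  have hhigh : ∀ δ, 0 < δ → δ ≤ δbar →
      stacked (Fd δ) (cd δ) J N x0 (ustar δ)
        ≤ (N : ℝ) * J x0 + (N : ℝ) * ω (C * δ) := by
    intro δ hδ hδb
    have hterm : ∀ i ∈ Finset.range (N - 1),
        cd δ (traj (Fd δ) x0 (ustar δ) i) (ustar δ i)
          + J (Fd δ (traj (Fd δ) x0 (ustar δ) i) (ustar δ i))
        ≤ J x0 + ω (C * δ) := by
      intro i hi
      rw [Finset.mem_range] at hi
      have hiN : i < N := by omega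
      rw [hgEq δ hδ hδb i hi]
      have h2 := hJb δ hδ hδb (ustar δ) (hustarU δ hδ hδb) i hiN
      linarith [(abs_le.mp h2).2]
    have hsum := Finset.sum_le_card_nsmul (Finset.range (N - 1)) _ _ hterm
    rw [Finset.card_range, nsmul_eq_mul] at hsum
    have hlast := hJb δ hδ hδb (ustar δ) (hustarU δ hδ hδb) (N - 1) (by omega)
    have hlast' := (abs_le.mp hlast).2
    have hcast : ((N - 1 : ℕ) : ℝ) = (N : ℝ) - 1 := by
      have : 1 ≤ N := by omega
      push_cast [this]; ring
    rw [hcast] at hsum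
    unfold stacked
    nlinarith [hsum, hlast']
  -- per-δ bounds on the gap
  have hgap : ∀ δ, 0 < δ → δ ≤ δbar →
      (0 ≤ ((∑ i ∈ Finset.range (N - 1),
            (cd δ (traj (Fd δ) x0 (ustar δ) i) (ustar δ i)
              + J (Fd δ (traj (Fd δ) x0 (ustar δ) i) (ustar δ i))))
          + J (traj (Fd δ) x0 (ustar δ) (N - 1)))
        - sInf {r : ℝ | ∃ u : ℕ → EuclideanSpace ℝ (Fin m),
            (∀ i, i < N - 1 → u i ∈ U) ∧ r = stacked (Fd δ) (cd δ) J N x0 u}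
      ∧ ((∑ i ∈ Finset.range (N - 1),
            (cd δ (traj (Fd δ) x0 (ustar δ) i) (ustar δ i)
              + J (Fd δ (traj (Fd δ) x0 (ustar δ) i) (ustar δ i))))
          + J (traj (Fd δ) x0 (ustar δ) (N - 1)))
        - sInf {r : ℝ | ∃ u : ℕ → EuclideanSpace ℝ (Fin m),
            (∀ i, i < N - 1 → u i ∈ U) ∧ r = stacked (Fd δ) (cd δ) J N x0 u}
        ≤ 2 * (N : ℝ) * ω (C * δ)) := by
    intro δ hδ hδb
    set S := {r : ℝ | ∃ u : ℕ → EuclideanSpace ℝ (Fin m),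
        (∀ i, i < N - 1 → u i ∈ U) ∧ r = stacked (Fd δ) (cd δ) J N x0 u} with hS
    have hmem : stacked (Fd δ) (cd δ) J N x0 (ustar δ) ∈ S :=
      ⟨ustar δ, hustarU δ hδ hδb, rfl⟩
    have hbdd : BddBelow S := by
      refine ⟨(N : ℝ) * J x0 - (N : ℝ) * ω (C * δ), ?_⟩
      rintro r ⟨u, hu, rfl⟩
      exact hlow δ hδ hδb u hu
    have heqg : ((∑ i ∈ Finset.range (N - 1),
            (cd δ (traj (Fd δ) x0 (ustar δ) i) (ustar δ i)
              + J (Fd δ (traj (Fd δ) x0 (ustar δ) i) (ustar δ i))))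
          + J (traj (Fd δ) x0 (ustar δ) (N - 1)))
        = stacked (Fd δ) (cd δ) J N x0 (ustar δ) := rfl
    rw [heqg]
    have h1 : sInf S ≤ stacked (Fd δ) (cd δ) J N x0 (ustar δ) := csInf_le hbdd hmem
    have h2 : (N : ℝ) * J x0 - (N : ℝ) * ω (C * δ) ≤ sInf S := by
      refine le_csInf ⟨_, hmem⟩ ?_
      rintro r ⟨u, hu, rfl⟩
      exact hlow δ hδ hδb u hu
    have h3 := hhigh δ hδ hδb
    constructor <;> linarith
  -- squeeze
  have hmemf : Set.Ioc (0:ℝ) δbar ∈ nhdsWithin (0:ℝ) (Set.Ioi 0) :=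
    Ioc_mem_nhdsGT_of_mem ⟨le_rfl, hδbar⟩
  have hg0 : Tendsto (fun δ : ℝ => 2 * (N : ℝ) * ω (C * δ))
      (nhdsWithin 0 (Set.Ioi 0)) (nhds 0) := by
    have hmul : Tendsto (fun δ : ℝ => C * δ) (nhdsWithin 0 (Set.Ioi 0))
        (nhdsWithin 0 (Set.Ioi 0)) := by
      apply tendsto_nhdsWithin_of_tendsto_nhds_of_eventually_within
      · have : Tendsto (fun δ : ℝ => C * δ) (nhds 0) (nhds (C * 0)) :=
          (continuous_const.mul continuous_id).tendsto 0
        simpa using this.mono_left nhdsWithin_le_nhds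
      · filter_upwards [self_mem_nhdsWithin] with δ hδ
        exact mul_pos hCpos hδ
    have := (hωlim.comp hmul).const_mul (2 * (N : ℝ))
    simpa using this
  apply squeeze_zero'
  · filter_upwards [hmemf] with δ hδ
    exact (hgap δ hδ.1 hδ.2).1
  · filter_upwards [hmemf] with δ hδ
    exact (hgap δ hδ.1 hδ.2).2
  · exact hg0
end

section
/- Let U ⊆ ℝᵐ be compact and nonempty, A ⊆ ℝⁿ compact, δ > 0, and let f : ℝⁿ × ℝᵐ → ℝⁿ be continuous and locally Lipschitz in its first argument uniformly in the second over U (for every compact K ⊆ ℝⁿ there is L ≥ 0 with ‖f(x,u) − f(y,u)‖ ≤ L‖x − y‖ for all x, y ∈ K, u ∈ U). Suppose H : ℝⁿ × ℝᵐ → C([0,δ], ℝⁿ) is such that for every (x₀, u) ∈ A × U the curve H(x₀,u) satisfies H(x₀,u)(0) = x₀ and is differentiable on [0,δ] with derivative f(H(x₀,u)(t), u) for all t ∈ [0,δ]. Then the image H(A × U) is a compact subset of C([0,δ], ℝⁿ) equipped with the supremum norm, and the union of the ranges ⋃_{(x₀,u) ∈ A × U} { H(x₀,u)(t) : t ∈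 [0,δ] } is a bounded subset of ℝⁿ. -/
/-!
The solutions depend continuously on `(x₀, u)`. Around the trajectory of `(x₀, u₀)` the field is
Lipschitz on the compact `1`-thickening of its range, and Grönwall's inequality, applied up to the
first time at which a nearby trajectory could be `1` away, keeps the two trajectories uniformly
close. Hence `H` is continuous on the compact set `A × U`, its image is compact, and the union of
the ranges is the image of that compact set times `[0, δ]` under evaluation.
-/

open Set Metric Filter Topology NNReal

theorem tendsto_gronwallBound_self_nhds_zero (K x : ℝ) :
    Tendsto (fun η => gronwallBound η K η x) (𝓝 0) (𝓝 0) := by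
  have hcont : Continuous fun η => gronwallBound η K η x := by
    by_cases hK : K = 0
    · simp only [hK, gronwallBound_K0]
      fun_prop
    · simp only [gronwallBound_of_K_ne_0 hK]
      fun_prop
  simpa only [gronwallBound_ε0_δ0] using hcont.tendsto 0

theorem IsCompact.biUnion_range {X Y : Type*} [TopologicalSpace X] [CompactSpace X]
    [TopologicalSpace Y] [LocallyCompactPair X Y] {S : Set C(X, Y)} (hS : IsCompact S) :
    IsCompact (⋃ γ ∈ S, range γ) := by
  convert (hS.prod isCompact_univ).image continuous_eval
  ext y
  simp [eq_comm]

section Trajectories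

variable {E : Type*} [NormedAddCommGroup E] [NormedSpace ℝ E]
  {v w : E → E} {g g₀ : ℝ → E} {C : Set E} {L : ℝ≥0} {r δ ε a b : ℝ}

/-- `v` need only be Lipschitz near `C`: while the Grönwall bound stays below `r`, the trajectory
`g` cannot leave the `r`-thickening of `C`. -/
theorem dist_le_gronwallBound_of_lipschitzOnWith_cthickening
    (hv : LipschitzOnWith L v (cthickening r C)) (hvw : ∀ y ∈ cthickening r C, dist (w y) (v y) ≤ ε)
    (hε : 0 ≤ ε)
    (hg : ContinuousOn g (Icc a b)) (hg' : ∀ t ∈ Ico a b, HasDerivWithinAt g (w (g t)) (Ici t) t)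
    (hg₀ : ContinuousOn g₀ (Icc a b))
    (hg₀' : ∀ t ∈ Ico a b, HasDerivWithinAt g₀ (v (g₀ t)) (Ici t) t)
    (hg₀C : ∀ t ∈ Ico a b, g₀ t ∈ C) (ha : dist (g a) (g₀ a) ≤ δ)
    (hr : gronwallBound δ L ε (b - a) < r) :
    ∀ t ∈ Icc a b, dist (g t) (g₀ t) ≤ gronwallBound δ L ε (t - a) := by
  have hmono := gronwallBound_mono (dist_nonneg.trans ha) hε L.coe_nonneg
  have gronwall_upto : ∀ c ≤ b, (∀ t ∈ Ico a c, dist (g t) (g₀ t) < r) →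
      ∀ t ∈ Icc a c, dist (g t) (g₀ t) ≤ gronwallBound δ L ε (t - a) := by
    intro c hc hclose
    have hsub : Icc a c ⊆ Icc a b := Icc_subset_Icc_right hc
    have hsub' : Ico a c ⊆ Ico a b := Ico_subset_Ico_right hc
    have hmem : ∀ t ∈ Ico a c, g t ∈ cthickening r C := fun t ht =>
      mem_cthickening_of_dist_le _ _ _ _ (hg₀C t (hsub' ht)) (hclose t ht).le
    simpa only [add_zero] using dist_le_of_approx_trajectories_ODE_of_mem
      (v := fun _ => v) (s := fun _ => cthickening r C) (εg := 0)
      (fun _ _ => hv) (hg.mono hsub) (fun t ht => hg' t (hsub' ht))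
      (fun t ht => hvw _ (hmem t ht)) hmem
      (hg₀.mono hsub) (fun t ht => hg₀' t (hsub' ht)) (fun _ _ => (dist_self _).le)
      (fun t ht => self_subset_cthickening _ (hg₀C t (hsub' ht))) ha
  refine gronwall_upto b le_rfl fun t ht => ?_
  by_contra! hfar
  set B := Icc a b ∩ (fun s => dist (g s) (g₀ s)) ⁻¹' Ici r
  have hBclosed : IsClosed B :=
    (continuous_dist.comp_continuousOn (hg.prodMk hg₀)).preimage_isClosed_of_isClosed
      isClosed_Icc isClosed_Ici
  have hBbdd : BddBelow B := ⟨a, fun s hs => hs.1.1⟩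
  -- the first time at which the trajectories are `r` apart
  have hT : sInf B ∈ B := hBclosed.csInf_mem ⟨t, Ico_subset_Icc_self ht, hfar⟩ hBbdd
  have hbefore : ∀ s ∈ Ico a (sInf B), dist (g s) (g₀ s) < r := fun s hs =>
    not_le.1 fun hs' => notMem_of_lt_csInf hs.2 hBbdd ⟨⟨hs.1, hs.2.le.trans hT.1.2⟩, hs'⟩
  have hT_close := gronwall_upto (sInf B) hT.1.2 hbefore (sInf B) ⟨hT.1.1, le_rfl⟩
  exact (mem_Ici.1 hT.2 |>.trans <| hT_close.trans <| hmono <| by linarith [hT.1.2]).not_gt hr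

end Trajectories

section ContinuousDependence

variable {E P : Type*} [NormedAddCommGroup E] [NormedSpace ℝ E] [ProperSpace E]
  [TopologicalSpace P]

theorem continuousOn_trajectory_ODE_of_locallyLipschitz {f : E × P → E} (hf : Continuous f)
    {U : Set P} (hfl : ∀ K : Set E, IsCompact K → ∃ L ≥ (0 : ℝ),
      ∀ x ∈ K, ∀ y ∈ K, ∀ u ∈ U, ‖f (x, u) - f (y, u)‖ ≤ L * ‖x - y‖)
    {A : Set E} {a b : ℝ} (hab : a ≤ b) (H : E × P → C(Icc a b, E))
    (hinit : ∀ p ∈ A ×ˢ U, H p ⟨a, left_mem_Icc.2 hab⟩ = p.1)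
    (hderiv : ∀ p ∈ A ×ˢ U, ∀ t ∈ Icc a b,
      HasDerivWithinAt (fun s => H p (projIcc a b hab s)) (f (H p (projIcc a b hab t), p.2))
        (Icc a b) t) :
    ContinuousOn H (A ×ˢ U) := by
  have hderiv_right : ∀ p ∈ A ×ˢ U, ∀ t ∈ Ico a b,
      HasDerivWithinAt (fun s => H p (projIcc a b hab s)) (f (H p (projIcc a b hab t), p.2))
        (Ici t) t := fun p hp t ht =>
    (hderiv p hp t (Ico_subset_Icc_self ht)).mono_of_mem_nhdsWithin (Icc_mem_nhdsGE_of_mem ht)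
  have hcurve : ∀ p, ContinuousOn (fun s => H p (projIcc a b hab s)) (Icc a b) := fun p =>
    ((H p).continuous.comp continuous_projIcc).continuousOn
  rintro ⟨x₀, u₀⟩ hp₀
  rw [ContinuousWithinAt, Metric.tendsto_nhds]
  intro ε hε
  set C := range (H (x₀, u₀))
  have hK : IsCompact (cthickening 1 C) := (isCompact_range (H (x₀, u₀)).continuous).cthickening
  obtain ⟨L, hL0, hL⟩ := hfl _ hK
  lift L to ℝ≥0 using hL0
  have hLip : LipschitzOnWith L (fun y => f (y, u₀)) (cthickening 1 C) :=
    LipschitzOnWith.of_dist_le_mul fun x hx y hy => by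
      simpa only [dist_eq_norm] using hL x hx y hy u₀ hp₀.2
  have hsmall : ∀ᶠ η in 𝓝[>] 0, gronwallBound η L η (b - a) < min ε 1 :=
    ((tendsto_gronwallBound_self_nhds_zero L (b - a)).mono_left nhdsWithin_le_nhds).eventually
      (gt_mem_nhds (lt_min hε one_pos))
  obtain ⟨η, hηε, hη : 0 < η⟩ := (hsmall.and self_mem_nhdsWithin).exists
  have hfield : ∀ᶠ u in 𝓝 u₀, ∀ y ∈ cthickening 1 C, dist (f (y, u)) (f (y, u₀)) < η := by
    obtain ⟨V, hV, hVf⟩ := hK.mem_uniformity_of_prod (f := fun u y => f (y, u)) (s := univ)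
      (hf.comp continuous_swap).continuousOn (mem_univ u₀) (dist_mem_uniformity hη)
    exact Filter.mem_of_superset (nhdsWithin_univ u₀ ▸ hV) hVf
  filter_upwards [self_mem_nhdsWithin,
    (continuous_snd.tendsto (x₀, u₀)).eventually hfield |>.filter_mono nhdsWithin_le_nhds,
    (continuous_fst.tendsto (x₀, u₀)).eventually (ball_mem_nhds x₀ hη) |>.filter_mono
      nhdsWithin_le_nhds] with ⟨x, u⟩ hp hu hx
  have hclose := dist_le_gronwallBound_of_lipschitzOnWith_cthickening hLip
    (fun y hy => (hu y hy).le) hη.le (hcurve _) (hderiv_right _ hp) (hcurve _)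
    (hderiv_right _ hp₀) (fun t _ => mem_range_self _)
    (by simpa only [projIcc_left, hinit _ hp, hinit _ hp₀] using (mem_ball.1 hx).le)
    (hηε.trans_le (min_le_right _ _))
  rw [ContinuousMap.dist_lt_iff hε]
  intro t
  calc dist (H (x, u) t) (H (x₀, u₀) t)
      ≤ gronwallBound η L η (t - a) := by simpa only [projIcc_val] using hclose t t.2
    _ ≤ gronwallBound η L η (b - a) := gronwallBound_mono hη.le hη.le L.coe_nonneg (by
        linarith [t.2.2])
    _ < ε := hηε.trans_le (min_le_left _ _)

end ContinuousDependence

theorem flow_image_compact_and_ranges_bounded_general {n m : ℕ}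
    (U : Set (EuclideanSpace ℝ (Fin m))) (hUc : IsCompact U)
    (A : Set (EuclideanSpace ℝ (Fin n))) (hAc : IsCompact A)
    (δ : ℝ) (hδ : 0 < δ)
    (f : EuclideanSpace ℝ (Fin n) × EuclideanSpace ℝ (Fin m) → EuclideanSpace ℝ (Fin n))
    (hfc : Continuous f)
    -- locally Lipschitz in the first argument, uniformly in the second over `U`
    (hfl : ∀ K : Set (EuclideanSpace ℝ (Fin n)), IsCompact K → ∃ L ≥ (0 : ℝ),
      ∀ x ∈ K, ∀ y ∈ K, ∀ u ∈ U, ‖f (x, u) - f (y, u)‖ ≤ L * ‖x - y‖)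
    -- `H (x₀, u)` is the solution curve of `ẋ = f(x, u)`, `x(0) = x₀`, on `[0, δ]`
    (H : EuclideanSpace ℝ (Fin n) × EuclideanSpace ℝ (Fin m) →
      C(Set.Icc (0 : ℝ) δ, EuclideanSpace ℝ (Fin n)))
    (hinit : ∀ p ∈ A ×ˢ U, H p ⟨0, Set.left_mem_Icc.mpr hδ.le⟩ = p.1)
    (hderiv : ∀ p ∈ A ×ˢ U, ∀ t ∈ Set.Icc (0 : ℝ) δ,
      HasDerivWithinAt (fun s : ℝ => H p (Set.projIcc 0 δ hδ.le s))
        (f (H p (Set.projIcc 0 δ hδ.le t), p.2)) (Set.Icc (0 : ℝ) δ) t) :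
    -- the image `H(A × U)` is compact in `C([0,δ], ℝⁿ)` (sup-norm topology), and
    -- the union of the ranges of the curves is a bounded subset of `ℝⁿ`
    IsCompact (H '' (A ×ˢ U)) ∧
    Bornology.IsBounded (⋃ p ∈ A ×ˢ U, Set.range fun t => H p t) := by
  have hcompact : IsCompact (H '' (A ×ˢ U)) := (hAc.prod hUc).image_of_continuousOn
    (continuousOn_trajectory_ODE_of_locallyLipschitz hfc hfl hδ.le H hinit hderiv)
  refine ⟨hcompact, ?_⟩
  simpa only [biUnion_image] using hcompact.biUnion_range.isBounded

theorem flow_image_compact_and_ranges_bounded {n m : ℕ}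
    (U : Set (EuclideanSpace ℝ (Fin m))) (hUc : IsCompact U) (hUne : U.Nonempty)
    (A : Set (EuclideanSpace ℝ (Fin n))) (hAc : IsCompact A)
    (δ : ℝ) (hδ : 0 < δ)
    (f : EuclideanSpace ℝ (Fin n) × EuclideanSpace ℝ (Fin m) → EuclideanSpace ℝ (Fin n))
    (hfc : Continuous f)
    -- locally Lipschitz in the first argument, uniformly in the second over `U`
    (hfl : ∀ K : Set (EuclideanSpace ℝ (Fin n)), IsCompact K → ∃ L ≥ (0 : ℝ),
      ∀ x ∈ K, ∀ y ∈ K, ∀ u ∈ U, ‖f (x, u) - f (y, u)‖ ≤ L * ‖x - y‖)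
    -- `H (x₀, u)` is the solution curve of `ẋ = f(x, u)`, `x(0) = x₀`, on `[0, δ]`
    (H : EuclideanSpace ℝ (Fin n) × EuclideanSpace ℝ (Fin m) →
      C(Set.Icc (0 : ℝ) δ, EuclideanSpace ℝ (Fin n)))
    (hinit : ∀ p ∈ A ×ˢ U, H p ⟨0, Set.left_mem_Icc.mpr hδ.le⟩ = p.1)
    (hderiv : ∀ p ∈ A ×ˢ U, ∀ t ∈ Set.Icc (0 : ℝ) δ,
      HasDerivWithinAt (fun s : ℝ => H p (Set.projIcc 0 δ hδ.le s))
        (f (H p (Set.projIcc 0 δ hδ.le t), p.2)) (Set.Icc (0 : ℝ) δ) t) :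
    -- the image `H(A × U)` is compact in `C([0,δ], ℝⁿ)` (sup-norm topology), and
    -- the union of the ranges of the curves is a bounded subset of `ℝⁿ`
    IsCompact (H '' (A ×ˢ U)) ∧
    Bornology.IsBounded (⋃ p ∈ A ×ˢ U, Set.range fun t => H p t) :=
  flow_image_compact_and_ranges_bounded_general U hUc A hAc δ hδ f hfc hfl H hinit hderiv
end

section
/- Fix x₀ ∈ ℝⁿ and a horizon N ≥ 2. Define the complemented stacked objective of a control sequence u₀, …, u_{N−2} ∈ U with trajectory x₀, x_{i+1} = F(x_i, u_i), by Q∘(x₀ | u₀, …, u_{N−2}) := Σ_{i=0}^{N−2} Q(x_i, u_i) + J(x_{N−1}) + Σ_{i=0}^{N−2} (N−1−i)·c(x_i, u_i). Let u*₀, …, u*_{N−2} be a greedy optimal control sequence from x₀ with trajectory x*₀, …, x*_{N−1}. Then any control sequence ū₀, …, ū_{N−2} ∈ U minimizing Q∘(x₀ | ·), with trajectory x̄₀, …, x̄_{N−1}, satisfies Σ_{i=0}^{N−2} c(x̄_i, ū_i) + J(x̄_{N−1}) = Σ_{i=0}^{N−2} c(x*_i, u*_i) + J(x*_{N−1}); i.e.,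 minimizers of the complemented stack are optimal control inputs. -/
/-- The complemented stacked objective
`Q∘(x₀ | u₀, …, u_{N−2}) = Σ_{i=0}^{N−2} Q(xᵢ, uᵢ) + J(x_{N−1}) + Σ_{i=0}^{N−2} (N−1−i)·c(xᵢ, uᵢ)`,
where `Q(x,u) = c(x,u) + J(F(x,u))`. -/
noncomputable def cstacked {E Em : Type*} (F : E → Em → E) (c : E → Em → ℝ) (J : E → ℝ)
    (N : ℕ) (x0 : E) (u : ℕ → Em) : ℝ :=
  (∑ i ∈ Finset.range (N - 1),
      (c (traj F x0 u i) (u i) + J (F (traj F x0 u i) (u i))))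
    + J (traj F x0 u (N - 1))
    + ∑ i ∈ Finset.range (N - 1), ((N - 1 - i : ℕ) : ℝ) * c (traj F x0 u i) (u i)

lemma abel_id (M : ℕ) (g : ℕ → ℝ) :
    ∑ i ∈ Finset.range M, ((M + 1 - i : ℕ) : ℝ) * (g (i+1) - g i)
      = (∑ i ∈ Finset.range M, g (i+1)) + g M - (M+1) * g 0 := by
  induction M with
  | zero => simp
  | succ M ih =>
    have h1 : ∀ i ∈ Finset.range (M+1),
        ((M + 1 + 1 - i : ℕ) : ℝ) * (g (i+1) - g i)
          = ((M + 1 - i : ℕ) : ℝ) * (g (i+1) - g i) + (g (i+1) - g i) := by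
      intro i hi
      have hi' : i ≤ M := Nat.lt_succ_iff.mp (Finset.mem_range.mp hi)
      have h2 : (M + 1 + 1 - i : ℕ) = (M + 1 - i) + 1 := by omega
      rw [h2]; push_cast; ring
    rw [Finset.sum_congr rfl h1, Finset.sum_add_distrib, Finset.sum_range_sub (fun i => g i),
      Finset.sum_range_succ (fun i => ((M + 1 - i : ℕ) : ℝ) * (g (i+1) - g i)) M, ih,
      Finset.sum_range_succ (fun i => g (i+1)) M]
    simp only [Nat.add_sub_cancel_left, Nat.sub_self]
    push_cast; ring

lemma cstacked_eq {E Em : Type*} (F : E → Em → E) (c : E → Em → ℝ) (J : E → ℝ)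
    (M : ℕ) (x0 : E) (u : ℕ → Em) :
    cstacked F c J (M+1) x0 u
      = (∑ i ∈ Finset.range M, ((M + 1 - i : ℕ) : ℝ) *
          (c (traj F x0 u i) (u i) + J (traj F x0 u (i+1)) - J (traj F x0 u i)))
        + (M+1) * J (traj F x0 u 0) := by
  set x := traj F x0 u with hx
  set cc : ℕ → ℝ := fun i => c (x i) (u i) with hcc
  set g : ℕ → ℝ := fun i => J (x i) with hg
  have hF : ∀ i, J (F (x i) (u i)) = g (i+1) := fun i => rfl
  have step : ∀ i ∈ Finset.range M,
      ((M + 1 - i : ℕ) : ℝ) * (cc i + g (i+1) - g i)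
        = (cc i + ((M - i : ℕ) : ℝ) * cc i) + ((M + 1 - i : ℕ) : ℝ) * (g (i+1) - g i) := by
    intro i hi
    have hi' : i < M := Finset.mem_range.mp hi
    have h2 : (M + 1 - i : ℕ) = (M - i) + 1 := by omega
    rw [h2]; push_cast; ring
  rw [Finset.sum_congr rfl step, Finset.sum_add_distrib, Finset.sum_add_distrib, abel_id M g]
  show (∑ i ∈ Finset.range (M+1-1), (cc i + g (i+1))) + g (M+1-1)
      + ∑ i ∈ Finset.range (M+1-1), ((M+1-1 - i : ℕ) : ℝ) * cc i = _
  simp only [Nat.add_sub_cancel]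
  rw [Finset.sum_add_distrib]
  ring

theorem complemented_stack_minimizer_is_optimal {n m : ℕ}
    (U : Set (EuclideanSpace ℝ (Fin m))) (hU : U.Nonempty)
    (F : EuclideanSpace ℝ (Fin n) → EuclideanSpace ℝ (Fin m) → EuclideanSpace ℝ (Fin n))
    (c : EuclideanSpace ℝ (Fin n) → EuclideanSpace ℝ (Fin m) → ℝ)
    (J : EuclideanSpace ℝ (Fin n) → ℝ)
    -- Bellman equation with attained minimum
    (hBellEx : ∀ x, ∃ u ∈ U, c x u + J (F x u) = J x)
    (hBellLe : ∀ x, ∀ u ∈ U, J x ≤ c x u + J (F x u))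
    (x0 : EuclideanSpace ℝ (Fin n)) (N : ℕ) (hN : 2 ≤ N)
    -- greedy optimal control sequence `ustar` from `x0`
    (ustar : ℕ → EuclideanSpace ℝ (Fin m))
    (hustarU : ∀ i, i < N - 1 → ustar i ∈ U)
    (hgreedy : ∀ i, i < N - 1 → ∀ u ∈ U,
      c (traj F x0 ustar i) (ustar i) + J (F (traj F x0 ustar i) (ustar i))
        ≤ c (traj F x0 ustar i) u + J (F (traj F x0 ustar i) u))
    -- `ubar` minimizes the complemented stacked objective over admissible sequences
    (ubar : ℕ → EuclideanSpace ℝ (Fin m))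
    (hubarU : ∀ i, i < N - 1 → ubar i ∈ U)
    (hubarMin : ∀ u : ℕ → EuclideanSpace ℝ (Fin m), (∀ i, i < N - 1 → u i ∈ U) →
      cstacked F c J N x0 ubar ≤ cstacked F c J N x0 u) :
    (∑ i ∈ Finset.range (N - 1), c (traj F x0 ubar i) (ubar i))
        + J (traj F x0 ubar (N - 1))
      = (∑ i ∈ Finset.range (N - 1), c (traj F x0 ustar i) (ustar i))
        + J (traj F x0 ustar (N - 1)) := by
  obtain ⟨M, rfl⟩ : ∃ M, N = M + 1 := ⟨N - 1, by omega⟩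
  simp only [Nat.add_sub_cancel] at *
  set xs := traj F x0 ustar with hxs
  set xb := traj F x0 ubar with hxb
  set Δs : ℕ → ℝ := fun i => c (xs i) (ustar i) + J (xs (i+1)) - J (xs i) with hΔs
  set Δb : ℕ → ℝ := fun i => c (xb i) (ubar i) + J (xb (i+1)) - J (xb i) with hΔb
  have hFs : ∀ i, xs (i+1) = F (xs i) (ustar i) := fun i => rfl
  have hFb : ∀ i, xb (i+1) = F (xb i) (ubar i) := fun i => rfl
  -- greedy has all increments zero
  have hΔs0 : ∀ i, i < M → Δs i = 0 := by
    intro i hi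
    obtain ⟨u, huU, hu⟩ := hBellEx (xs i)
    have h1 := hgreedy i hi u huU
    have h2 := hBellLe (xs i) (ustar i) (hustarU i hi)
    simp only [hΔs, hFs i]
    linarith
  -- increments are nonneg for admissible sequences
  have hΔb0 : ∀ i, i < M → 0 ≤ Δb i := by
    intro i hi
    have := hBellLe (xb i) (ubar i) (hubarU i hi)
    simp only [hΔb, hFb i]; linarith
  -- cstacked values
  have hcs : cstacked F c J (M+1) x0 ustar
      = (∑ i ∈ Finset.range M, ((M + 1 - i : ℕ) : ℝ) * Δs i) + (M+1) * J x0 :=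
    cstacked_eq F c J M x0 ustar
  have hcb : cstacked F c J (M+1) x0 ubar
      = (∑ i ∈ Finset.range M, ((M + 1 - i : ℕ) : ℝ) * Δb i) + (M+1) * J x0 :=
    cstacked_eq F c J M x0 ubar
  have hsumS : (∑ i ∈ Finset.range M, ((M + 1 - i : ℕ) : ℝ) * Δs i) = 0 :=
    Finset.sum_eq_zero fun i hi => by rw [hΔs0 i (Finset.mem_range.mp hi), mul_zero]
  have hle := hubarMin ustar hustarU
  rw [hcs, hcb, hsumS] at hle
  have hsumB : (∑ i ∈ Finset.range M, ((M + 1 - i : ℕ) : ℝ) * Δb i) = 0 := by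
    have hnn : ∀ i ∈ Finset.range M, 0 ≤ ((M + 1 - i : ℕ) : ℝ) * Δb i := fun i hi =>
      mul_nonneg (Nat.cast_nonneg _) (hΔb0 i (Finset.mem_range.mp hi))
    have := Finset.sum_nonneg hnn
    linarith
  have hterm : ∀ i, i < M → Δb i = 0 := by
    intro i hi
    have h := (Finset.sum_eq_zero_iff_of_nonneg (fun i hi =>
      mul_nonneg (Nat.cast_nonneg _) (hΔb0 i (Finset.mem_range.mp hi)))).mp hsumB i
      (Finset.mem_range.mpr hi)
    have hc : ((M + 1 - i : ℕ) : ℝ) ≠ 0 := by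
      have : 0 < M + 1 - i := by omega
      positivity
    exact (mul_eq_zero.mp h).resolve_left hc
  -- telescoping
  have tele : ∀ (u : ℕ → _) , (∑ i ∈ Finset.range M,
      (c (traj F x0 u i) (u i) + J (traj F x0 u (i+1)) - J (traj F x0 u i)))
      = (∑ i ∈ Finset.range M, c (traj F x0 u i) (u i))
        + J (traj F x0 u M) - J x0 := by
    intro u
    have h := Finset.sum_range_sub (fun i => J (traj F x0 u i)) M
    have : ∑ i ∈ Finset.range M,
        (c (traj F x0 u i) (u i) + J (traj F x0 u (i+1)) - J (traj F x0 u i))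
      = (∑ i ∈ Finset.range M, c (traj F x0 u i) (u i))
        + ∑ i ∈ Finset.range M, (J (traj F x0 u (i+1)) - J (traj F x0 u i)) := by
      rw [← Finset.sum_add_distrib]; apply Finset.sum_congr rfl; intro i _; ring
    rw [this, h]; show _ = _ + J (traj F x0 u M) - J (traj F x0 u 0); ring
  have hTb : (∑ i ∈ Finset.range M, Δb i) = 0 :=
    Finset.sum_eq_zero fun i hi => hterm i (Finset.mem_range.mp hi)
  have hTs : (∑ i ∈ Finset.range M, Δs i) = 0 :=
    Finset.sum_eq_zero fun i hi => hΔs0 i (Finset.mem_range.mp hi)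
  have e1 := tele ubar
  have e2 := tele ustar
  rw [← hxb] at e1; rw [← hxs] at e2
  simp only [← hΔb] at e1
  simp only [← hΔs] at e2
  rw [hTb] at e1; rw [hTs] at e2
  linarith
end

section
/- Fix x₀ ∈ ℝⁿ and a horizon N ≥ 2, and define the complemented stacked objective Q∘(x₀ | u₀, …, u_{N−2}) := Σ_{i=0}^{N−2} Q(x_i, u_i) + J(x_{N−1}) + Σ_{i=0}^{N−2} (N−1−i)·c(x_i, u_i), where x₀, x_{i+1} = F(x_i, u_i) is the trajectory of the sequence. Suppose a greedy optimal control sequence from x₀ exists. Then any control sequence ū₀, …, ū_{N−2} ∈ U minimizing Q∘(x₀ | ·), with trajectory x̄₀, …, x̄_{N−1}, satisfies for every i ∈ {0, …, N−2}: Σ_{j=0}^{i} c(x̄_j, ū_j) + J(x̄_{i+1}) = J(x₀); that is, each partial cost ψ_i of the minimizer attains the minimum of ψ_i over all control sequences. -/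
/-- The partial cost `ψᵢ`. -/
noncomputable def psiP {E Em : Type*} (F : E → Em → E) (c : E → Em → ℝ) (J : E → ℝ)
    (x0 : E) (u : ℕ → Em) (i : ℕ) : ℝ :=
  (∑ j ∈ Finset.range (i + 1), c (traj F x0 u j) (u j)) + J (traj F x0 u (i + 1))

lemma sum_sum_range (a : ℕ → ℝ) (M : ℕ) :
    ∑ i ∈ Finset.range M, ∑ j ∈ Finset.range (i + 1), a j
      = ∑ j ∈ Finset.range M, ((M - j : ℕ) : ℝ) * a j := by
  induction M with
  | zero => simp
  | succ M ih =>
    rw [Finset.sum_range_succ, ih,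
      Finset.sum_range_succ (fun j => ((M + 1 - j : ℕ) : ℝ) * a j)]
    have h1 : ∀ j ∈ Finset.range M,
        ((M + 1 - j : ℕ) : ℝ) * a j = ((M - j : ℕ) : ℝ) * a j + a j := by
      intro j hj
      have hj' : j ≤ M := le_of_lt (Finset.mem_range.mp hj)
      have : (M + 1 - j : ℕ) = (M - j) + 1 := by omega
      rw [this]; push_cast; ring
    rw [Finset.sum_congr rfl h1, Finset.sum_add_distrib]
    simp [Finset.sum_range_succ]
    ring

lemma cstacked_eq_psiP {E Em : Type*} (F : E → Em → E) (c : E → Em → ℝ) (J : E → ℝ)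
    (x0 : E) (u : ℕ → Em) (M : ℕ) (hM : 1 ≤ M) :
    cstacked F c J (M + 1) x0 u
      = (∑ i ∈ Finset.range M, psiP F c J x0 u i) + psiP F c J x0 u (M - 1) := by
  have hM1 : M - 1 + 1 = M := by omega
  have htr : ∀ x, J (F (traj F x0 u x) (u x)) = J (traj F x0 u (x + 1)) := fun x => rfl
  unfold cstacked psiP
  simp only [Nat.add_sub_cancel, hM1, Finset.sum_add_distrib,
    sum_sum_range (fun j => c (traj F x0 u j) (u j)), htr]
  ring

lemma psiP_ge {E Em : Type*} (U : Set Em) (F : E → Em → E) (c : E → Em → ℝ) (J : E → ℝ)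
    (hBellLe : ∀ x, ∀ u ∈ U, J x ≤ c x u + J (F x u))
    (x0 : E) (u : ℕ → Em) (M : ℕ) (hu : ∀ i, i < M → u i ∈ U) :
    ∀ i, i < M → J x0 ≤ psiP F c J x0 u i := by
  intro i
  induction i with
  | zero =>
    intro h
    have h2 := hBellLe x0 (u 0) (hu 0 h)
    simpa [psiP, traj, Finset.sum_range_one] using h2
  | succ i ih =>
    intro h
    have h1 := ih (by omega)
    have h2 := hBellLe (traj F x0 u (i + 1)) (u (i + 1)) (hu (i + 1) h)
    have h3 : traj F x0 u (i + 2) = F (traj F x0 u (i + 1)) (u (i + 1)) := rfl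
    have h4 : psiP F c J x0 u (i + 1)
        = psiP F c J x0 u i + (c (traj F x0 u (i + 1)) (u (i + 1))
          + J (traj F x0 u (i + 2)) - J (traj F x0 u (i + 1))) := by
      simp [psiP, Finset.sum_range_succ]; ring
    rw [h4, h3]
    linarith

lemma psiP_greedy {E Em : Type*} (F : E → Em → E) (c : E → Em → ℝ) (J : E → ℝ)
    (x0 : E) (u : ℕ → Em) (M : ℕ)
    (hstep : ∀ i, i < M →
      c (traj F x0 u i) (u i) + J (F (traj F x0 u i) (u i)) = J (traj F x0 u i)) :
    ∀ i, i < M → psiP F c J x0 u i = J x0 := by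
  intro i
  induction i with
  | zero =>
    intro h
    have h2 := hstep 0 h
    simpa [psiP, traj, Finset.sum_range_one] using h2
  | succ i ih =>
    intro h
    have h1 := ih (by omega)
    have h2 := hstep (i + 1) h
    have h3 : traj F x0 u (i + 2) = F (traj F x0 u (i + 1)) (u (i + 1)) := rfl
    have h4 : psiP F c J x0 u (i + 1)
        = psiP F c J x0 u i + (c (traj F x0 u (i + 1)) (u (i + 1))
          + J (traj F x0 u (i + 2)) - J (traj F x0 u (i + 1))) := by
      simp [psiP, Finset.sum_range_succ]; ring
    rw [h4, h3, h1]
    linarith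

theorem complemented_stack_minimizer_partial_costs_optimal {n m : ℕ}
    (U : Set (EuclideanSpace ℝ (Fin m))) (hU : U.Nonempty)
    (F : EuclideanSpace ℝ (Fin n) → EuclideanSpace ℝ (Fin m) → EuclideanSpace ℝ (Fin n))
    (c : EuclideanSpace ℝ (Fin n) → EuclideanSpace ℝ (Fin m) → ℝ)
    (J : EuclideanSpace ℝ (Fin n) → ℝ)
    -- Bellman equation with attained minimum
    (hBellEx : ∀ x, ∃ u ∈ U, c x u + J (F x u) = J x)
    (hBellLe : ∀ x, ∀ u ∈ U, J x ≤ c x u + J (F x u))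
    (x0 : EuclideanSpace ℝ (Fin n)) (N : ℕ) (hN : 2 ≤ N)
    -- a greedy optimal control sequence from `x0` exists
    (hgreedyEx : ∃ ustar : ℕ → EuclideanSpace ℝ (Fin m),
      (∀ i, i < N - 1 → ustar i ∈ U) ∧
      ∀ i, i < N - 1 → ∀ u ∈ U,
        c (traj F x0 ustar i) (ustar i) + J (F (traj F x0 ustar i) (ustar i))
          ≤ c (traj F x0 ustar i) u + J (F (traj F x0 ustar i) u))
    -- `ubar` minimizes the complemented stacked objective over admissible sequences
    (ubar : ℕ → EuclideanSpace ℝ (Fin m))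
    (hubarU : ∀ i, i < N - 1 → ubar i ∈ U)
    (hubarMin : ∀ u : ℕ → EuclideanSpace ℝ (Fin m), (∀ i, i < N - 1 → u i ∈ U) →
      cstacked F c J N x0 ubar ≤ cstacked F c J N x0 u) :
    -- each partial cost ψᵢ of the minimizer attains the minimum `J(x₀)`
    ∀ i, i < N - 1 →
      (∑ j ∈ Finset.range (i + 1), c (traj F x0 ubar j) (ubar j))
        + J (traj F x0 ubar (i + 1)) = J x0 := by
  obtain ⟨ustar, hustarU, hgreedy⟩ := hgreedyEx
  set M := N - 1 with hMdef
  have hM : 1 ≤ M := by omega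
  have hNM : N = M + 1 := by omega
  -- greedy step equality
  have hstep : ∀ i, i < M →
      c (traj F x0 ustar i) (ustar i) + J (F (traj F x0 ustar i) (ustar i))
        = J (traj F x0 ustar i) := by
    intro i hi
    obtain ⟨v, hv, hveq⟩ := hBellEx (traj F x0 ustar i)
    have h1 := hgreedy i hi v hv
    have h2 := hBellLe (traj F x0 ustar i) (ustar i) (hustarU i hi)
    have h3 : traj F x0 ustar (i + 1) = F (traj F x0 ustar i) (ustar i) := rfl
    linarith
  have hstarstep : ∀ i, i < M →
      c (traj F x0 ustar i) (ustar i) + J (F (traj F x0 ustar i) (ustar i))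
        = J (traj F x0 ustar i) := hstep
  have hpsistar : ∀ i, i < M → psiP F c J x0 ustar i = J x0 := by
    intro i hi
    exact psiP_greedy F c J x0 ustar M (fun i hi => by
      have := hstep i hi
      exact this) i hi
  -- value of cstacked at greedy
  have hstarval : cstacked F c J N x0 ustar = (M + 1 : ℝ) * J x0 := by
    rw [hNM, cstacked_eq_psiP F c J x0 ustar M hM]
    rw [Finset.sum_congr rfl (fun i hi => hpsistar i (Finset.mem_range.mp hi)),
      hpsistar (M - 1) (by omega)]
    simp [Finset.sum_const]
    ring
  have hge : ∀ i, i < M → J x0 ≤ psiP F c J x0 ubar i :=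
    psiP_ge U F c J hBellLe x0 ubar M hubarU
  have hle : cstacked F c J N x0 ubar ≤ (M + 1 : ℝ) * J x0 := by
    rw [← hstarval]; exact hubarMin ustar hustarU
  have hbar : (∑ i ∈ Finset.range M, psiP F c J x0 ubar i) + psiP F c J x0 ubar (M - 1)
      ≤ (M + 1 : ℝ) * J x0 := by
    rw [← cstacked_eq_psiP F c J x0 ubar M hM, ← hNM]; exact hle
  have hlast : J x0 ≤ psiP F c J x0 ubar (M - 1) := hge (M - 1) (by omega)
  have hsum_le : ∑ i ∈ Finset.range M, (psiP F c J x0 ubar i - J x0) ≤ 0 := by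
    have : ∑ i ∈ Finset.range M, (psiP F c J x0 ubar i - J x0)
        = (∑ i ∈ Finset.range M, psiP F c J x0 ubar i) - M * J x0 := by
      rw [Finset.sum_sub_distrib]
      simp [Finset.sum_const]
    rw [this]
    have : (∑ i ∈ Finset.range M, psiP F c J x0 ubar i) ≤ M * J x0 := by
      nlinarith [hbar, hlast]
    linarith
  have hterm0 : ∀ i ∈ Finset.range M, psiP F c J x0 ubar i - J x0 = 0 := by
    have hnn : ∀ i ∈ Finset.range M, 0 ≤ psiP F c J x0 ubar i - J x0 := by
      intro i hi
      have := hge i (Finset.mem_range.mp hi)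
      linarith
    have hzero : ∑ i ∈ Finset.range M, (psiP F c J x0 ubar i - J x0) = 0 :=
      le_antisymm hsum_le (Finset.sum_nonneg hnn)
    exact (Finset.sum_eq_zero_iff_of_nonneg hnn).mp hzero
  intro i hi
  have := hterm0 i (Finset.mem_range.mpr hi)
  have : psiP F c J x0 ubar i = J x0 := by linarith
  simpa [psiP] using this
end
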